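/- arXiv:2503.08942 — 3 statements merged into one kernel-verified Lean document; each statement's English description precedes it below -/
import Mathlib

section
/- Under exact EGPO updates with learning rate η satisfying 0 < η ≤ 1/(β+3), for every t ≥ 0 one has KL(π*_β ‖ π^{(t+1)}) ≤ (1 − ηβ) · KL(π*_β ‖ π^{(t)}). -/
open Real

/-- Tabular softmax policy. -/
noncomputable def softmax {Y : Type*} [Fintype Y] (θ : Y → ℝ) : Y → ℝ :=
  fun y => Real.exp (θ y) / ∑ y', Real.exp (θ y')

/-- Kullback–Leibler divergence between distributions on a finite set. -/
noncomputable def KLdiv {Y : Type*} [Fintype Y] (p q : Y → ℝ) : ℝ :=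
  ∑ y, p y * Real.log (p y / q y)

/-- `(P π)(y) = ∑ y' P(y, y') π(y')`. -/
noncomputable def matVec {Y : Type*} [Fintype Y] (P : Y → Y → ℝ) (p : Y → ℝ) : Y → ℝ :=
  fun y => ∑ y', P y y' * p y'

/-!
Write `a, u, h, w` for the logits of `π*_β, π^{(t)}, π^{(t+1/2)}, π^{(t+1)}` and `c = ηβ`. By the
fixed-point equation, `h - (1-c) u - c a = η P(π_u - π_a)` and `w - (1-c) u - c a = η P(π_h - π_a)`.
For softmax policies, `KL(π_a‖π_w) - (1-c) KL(π_a‖π_u)` equals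
`KL(π_h‖π_w) - (1-c) KL(π_h‖π_u) - c KL(π_h‖π_a) + ⟪π_h - π_a, w - (1-c) u - c a⟫`,
and the last term is `η ⟪v, P v⟫` with `v = π_h - π_a`, which vanishes because `P + Pᵀ` is the
all-ones matrix and `v` sums to zero. Since `w - h = η P(π_h - π_u)` is uniformly at most
`η ‖π_h - π_u‖₁ / 2`, a second-order bound on log-sum-exp and Pinsker's inequality (with
constant 4) give `KL(π_h‖π_w) ≤ η² KL(π_h‖π_u)`, and `η² ≤ 1 - ηβ` when `η ≤ 1/(β+3)`.
-/

open Finset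

section Softmax

variable {Y : Type*} [Fintype Y] [Nonempty Y]

lemma sum_exp_pos (θ : Y → ℝ) : 0 < ∑ y, exp (θ y) :=
  sum_pos (fun _ _ => exp_pos _) univ_nonempty

lemma softmax_pos (θ : Y → ℝ) (y : Y) : 0 < softmax θ y :=
  div_pos (exp_pos _) (sum_exp_pos θ)

lemma sum_softmax (θ : Y → ℝ) : ∑ y, softmax θ y = 1 := by
  simp only [softmax]
  rw [← sum_div, div_self (sum_exp_pos θ).ne']

lemma log_softmax (θ : Y → ℝ) (y : Y) :
    log (softmax θ y) = θ y - log (∑ y', exp (θ y')) := by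
  rw [softmax, log_div (exp_ne_zero _) (sum_exp_pos θ).ne', log_exp]

lemma KLdiv_softmax (a b : Y → ℝ) :
    KLdiv (softmax a) (softmax b)
      = ∑ y, softmax a y * (a y - b y) + (log (∑ y, exp (b y)) - log (∑ y, exp (a y))) := by
  have hterm : ∀ y, softmax a y * log (softmax a y / softmax b y)
      = softmax a y * (a y - b y)
        + softmax a y * (log (∑ y', exp (b y')) - log (∑ y', exp (a y'))) := by
    intro y
    rw [log_div (softmax_pos a y).ne' (softmax_pos b y).ne', log_softmax, log_softmax]
    ring
  rw [KLdiv, sum_congr rfl fun y _ => hterm y, sum_add_distrib, ← sum_mul, sum_softmax, one_mul]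

lemma KLdiv_softmax_three_point (a h u w : Y → ℝ) (c : ℝ) :
    KLdiv (softmax a) (softmax w) - (1 - c) * KLdiv (softmax a) (softmax u)
      = KLdiv (softmax h) (softmax w) - (1 - c) * KLdiv (softmax h) (softmax u)
        - c * KLdiv (softmax h) (softmax a)
        + ∑ y, (softmax h y - softmax a y) * (w y - (1 - c) * u y - c * a y) := by
  have hsum : ∑ y, (softmax h y * (h y - w y) - (1 - c) * (softmax h y * (h y - u y))
        - c * (softmax h y * (h y - a y))
        + (softmax h y - softmax a y) * (w y - (1 - c) * u y - c * a y))
      = ∑ y, (softmax a y * (a y - w y) - (1 - c) * (softmax a y * (a y - u y))) :=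
    sum_congr rfl fun y _ => by ring
  simp only [sum_add_distrib, sum_sub_distrib, ← mul_sum] at hsum
  rw [KLdiv_softmax a w, KLdiv_softmax a u, KLdiv_softmax h w, KLdiv_softmax h u,
    KLdiv_softmax h a]
  linear_combination -hsum

lemma KLdiv_softmax_le_sq {h w : Y → ℝ} {ε : ℝ} (hε : ε ≤ 1) (hwh : ∀ y, |w y - h y| ≤ ε) :
    KLdiv (softmax h) (softmax w) ≤ ε ^ 2 := by
  have hlogZ : log (∑ y, exp (w y)) - log (∑ y, exp (h y))
      = log (∑ y, softmax h y * exp (w y - h y)) := by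
    rw [← log_div (sum_exp_pos w).ne' (sum_exp_pos h).ne', sum_div]
    congr 1
    refine sum_congr rfl fun y _ => ?_
    rw [softmax, div_mul_eq_mul_div, ← exp_add, add_sub_cancel]
  have hexp : ∀ y, exp (w y - h y) ≤ 1 + (w y - h y) + ε ^ 2 := by
    intro y
    have htaylor := (abs_le.1 (abs_exp_sub_one_sub_id_le ((hwh y).trans hε))).2
    have hsq := sq_le_sq' (abs_le.1 (hwh y)).1 (abs_le.1 (hwh y)).2
    linarith
  have hpos : 0 < ∑ y, softmax h y * exp (w y - h y) :=
    sum_pos (fun y _ => mul_pos (softmax_pos h y) (exp_pos _)) univ_nonempty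
  calc KLdiv (softmax h) (softmax w)
      = ∑ y, softmax h y * (h y - w y) + log (∑ y, softmax h y * exp (w y - h y)) := by
        rw [KLdiv_softmax, hlogZ]
    _ ≤ ∑ y, softmax h y * (h y - w y) + (∑ y, softmax h y * exp (w y - h y) - 1) := by
        gcongr
        exact log_le_sub_one_of_pos hpos
    _ ≤ ∑ y, softmax h y * (h y - w y)
          + (∑ y, softmax h y * (1 + (w y - h y) + ε ^ 2) - 1) := by
        gcongr with y
        · exact (softmax_pos h y).le
        · exact hexp y
    _ = (∑ y, softmax h y) * (1 + ε ^ 2) - 1 := by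
        rw [← add_sub_assoc, ← sum_add_distrib, sum_mul]
        congr 1
        exact sum_congr rfl fun y _ => by ring
    _ = ε ^ 2 := by rw [sum_softmax]; ring

end Softmax

section KL

variable {Y : Type*} [Fintype Y]

lemma sq_sub_div_add_le {x y : ℝ} (hx : 0 < x) (hy : 0 < y) :
    (x - y) ^ 2 / (x + y) ≤ 2 * (x * log (x / y) - x + y) := by
  -- split the logarithm at the midpoint `m` and apply `1 - 1/t ≤ log t` to both halves
  set m := (x + y) / 2
  have hm : 0 < m := by positivity
  have hlog : (1 - m / x) + (1 - y / m) ≤ log (x / y) := by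
    have h1 := one_sub_inv_le_log_of_pos (div_pos hx hm)
    have h2 := one_sub_inv_le_log_of_pos (div_pos hm hy)
    rw [inv_div] at h1 h2
    rw [← div_mul_div_cancel₀ (a := x) (c := y) hm.ne',
      log_mul (div_pos hx hm).ne' (div_pos hm hy).ne']
    linarith
  have hmid : 2 * (x * ((1 - m / x) + (1 - y / m)) - x + y) = (x - y) ^ 2 / (x + y) := by
    simp only [m]
    field_simp
    ring
  nlinarith [mul_le_mul_of_nonneg_left hlog hx.le]

lemma sq_sum_abs_sub_le_four_mul_KLdiv {p q : Y → ℝ} (hp : ∀ y, 0 < p y) (hq : ∀ y, 0 < q y)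
    (hp1 : ∑ y, p y = 1) (hq1 : ∑ y, q y = 1) :
    (∑ y, |p y - q y|) ^ 2 ≤ 4 * KLdiv p q := by
  have hsum : ∑ y, (p y + q y) = 2 := by rw [sum_add_distrib, hp1, hq1]; norm_num
  have hKL : KLdiv p q = ∑ y, (p y * log (p y / q y) - p y + q y) := by
    rw [sum_add_distrib, sum_sub_distrib, hp1, hq1, sub_add_cancel, KLdiv]
  calc (∑ y, |p y - q y|) ^ 2 = 2 * ((∑ y, |p y - q y|) ^ 2 / ∑ y, (p y + q y)) := by
        rw [hsum]; ring
    _ ≤ 2 * ∑ y, |p y - q y| ^ 2 / (p y + q y) := by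
        gcongr
        exact sq_sum_div_le_sum_sq_div _ _ fun y _ => add_pos (hp y) (hq y)
    _ ≤ 2 * ∑ y, 2 * (p y * log (p y / q y) - p y + q y) := by
        gcongr with y
        rw [sq_abs]
        exact sq_sub_div_add_le (hp y) (hq y)
    _ = 4 * KLdiv p q := by rw [hKL, ← mul_sum]; ring

lemma sum_abs_sub_le_two {p q : Y → ℝ} (hp : ∀ y, 0 ≤ p y) (hq : ∀ y, 0 ≤ q y)
    (hp1 : ∑ y, p y = 1) (hq1 : ∑ y, q y = 1) :
    ∑ y, |p y - q y| ≤ 2 :=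
  calc ∑ y, |p y - q y| ≤ ∑ y, (|p y| + |q y|) := sum_le_sum fun y _ => abs_sub _ _
    _ = 2 := by
        simp only [abs_of_nonneg (hp _), abs_of_nonneg (hq _), sum_add_distrib, hp1, hq1]
        norm_num

lemma KLdiv_softmax_nonneg [Nonempty Y] (a b : Y → ℝ) : 0 ≤ KLdiv (softmax a) (softmax b) := by
  have := sq_sum_abs_sub_le_four_mul_KLdiv (softmax_pos a) (softmax_pos b)
    (sum_softmax a) (sum_softmax b)
  nlinarith [sq_nonneg (∑ y, |softmax a y - softmax b y|)]

end KL

section MatVec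

variable {Y : Type*} [Fintype Y] {P : Y → Y → ℝ}

lemma matVec_sub (P : Y → Y → ℝ) (p q : Y → ℝ) :
    matVec P (p - q) = matVec P p - matVec P q := by
  funext y
  simp only [matVec, Pi.sub_apply, mul_sub, sum_sub_distrib]

lemma two_mul_sum_mul_matVec (hPsum : ∀ y y', P y y' + P y' y = 1) (v : Y → ℝ) :
    2 * ∑ y, v y * matVec P v y = (∑ y, v y) ^ 2 := by
  rw [two_mul]
  simp only [matVec, mul_sum]
  nth_rewrite 2 [sum_comm]
  rw [← sum_add_distrib, sq, sum_mul_sum]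
  refine sum_congr rfl fun y _ => ?_
  rw [← sum_add_distrib]
  refine sum_congr rfl fun y' _ => ?_
  linear_combination v y * v y' * hPsum y y'

lemma abs_matVec_sub_le (hP0 : ∀ y y', 0 ≤ P y y') (hP1 : ∀ y y', P y y' ≤ 1)
    {p q : Y → ℝ} (hpq : ∑ y, p y = ∑ y, q y) (y : Y) :
    |matVec P p y - matVec P q y| ≤ (∑ y', |p y' - q y'|) / 2 := by
  -- `p - q` sums to zero, so `P` may be recentred to `P - 1/2`, whose entries lie in `[-1/2, 1/2]`
  have hcentre : matVec P p y - matVec P q y = ∑ y', (P y y' - 1 / 2) * (p y' - q y') := by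
    simp only [matVec, sub_mul, mul_sub, sum_sub_distrib, ← mul_sum, hpq]
    ring
  rw [hcentre, sum_div]
  refine (abs_sum_le_sum_abs _ _).trans (sum_le_sum fun y' _ => ?_)
  rw [abs_mul]
  have hP : |P y y' - 1 / 2| ≤ 2⁻¹ := abs_le.2 ⟨by linarith [hP0 y y'], by linarith [hP1 y y']⟩
  exact (mul_le_mul_of_nonneg_right hP (abs_nonneg _)).trans_eq (inv_mul_eq_div _ _)

end MatVec

theorem KLdiv_softmax_extragradient_le {Y : Type*} [Fintype Y] [Nonempty Y] {P : Y → Y → ℝ}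
    (hP0 : ∀ y y', 0 ≤ P y y') (hP1 : ∀ y y', P y y' ≤ 1)
    (hPsum : ∀ y y', P y y' + P y' y = 1)
    {a u h w : Y → ℝ} {c η : ℝ} (hc : 0 ≤ c) (hη : 0 ≤ η) (hη1 : η ≤ 1) (hηc : η ^ 2 ≤ 1 - c)
    (hh : ∀ y, h y = (1 - c) * u y + c * a y
      + η * (matVec P (softmax u) y - matVec P (softmax a) y))
    (hw : ∀ y, w y = (1 - c) * u y + c * a y
      + η * (matVec P (softmax h) y - matVec P (softmax a) y)) :
    KLdiv (softmax a) (softmax w) ≤ (1 - c) * KLdiv (softmax a) (softmax u) := by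
  set V := ∑ y, |softmax h y - softmax u y|
  have hV : V ≤ 2 := sum_abs_sub_le_two (fun y => (softmax_pos h y).le)
    (fun y => (softmax_pos u y).le) (sum_softmax h) (sum_softmax u)
  have hwh : ∀ y, |w y - h y| ≤ η * V / 2 := by
    intro y
    have hmove : w y - h y = η * (matVec P (softmax h) y - matVec P (softmax u) y) := by
      rw [hw y, hh y]; ring
    rw [hmove, abs_mul, abs_of_nonneg hη, mul_div_assoc]
    exact mul_le_mul_of_nonneg_left
      (abs_matVec_sub_le hP0 hP1 (by rw [sum_softmax, sum_softmax]) y) hη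
  have hKLhw : KLdiv (softmax h) (softmax w) ≤ η ^ 2 * KLdiv (softmax h) (softmax u) :=
    calc KLdiv (softmax h) (softmax w) ≤ (η * V / 2) ^ 2 :=
          KLdiv_softmax_le_sq (by nlinarith) hwh
      _ = η ^ 2 / 4 * V ^ 2 := by ring
      _ ≤ η ^ 2 / 4 * (4 * KLdiv (softmax h) (softmax u)) := by
          gcongr
          exact sq_sum_abs_sub_le_four_mul_KLdiv (softmax_pos h) (softmax_pos u)
            (sum_softmax h) (sum_softmax u)
      _ = η ^ 2 * KLdiv (softmax h) (softmax u) := by ring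
  have hcross : ∑ y, (softmax h y - softmax a y) * (w y - (1 - c) * u y - c * a y) = 0 := by
    have hskew :
        ∑ y, (softmax h y - softmax a y) * matVec P (softmax h - softmax a) y = 0 := by
      have := two_mul_sum_mul_matVec hPsum (softmax h - softmax a)
      simp only [Pi.sub_apply, sum_sub_distrib, sum_softmax, sub_self] at this
      linarith
    rw [← mul_zero η, ← hskew, mul_sum]
    refine sum_congr rfl fun y _ => ?_
    rw [hw y, matVec_sub, Pi.sub_apply]
    ring
  have hthree := KLdiv_softmax_three_point a h u w c
  rw [hcross, add_zero] at hthree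
  nlinarith [mul_nonneg (sub_nonneg.2 hηc) (KLdiv_softmax_nonneg h u),
    mul_nonneg hc (KLdiv_softmax_nonneg h a)]

/-- under exact EGPO updates with `0 < η ≤ 1/(β+3)`, for every `t ≥ 0`,
`KL(π*_β ‖ π^{(t+1)}) ≤ (1 − ηβ) · KL(π*_β ‖ π^{(t)})`. -/
theorem egpo_exact_one_step_contraction
    {Y : Type*} [Fintype Y] (hY : 2 ≤ Fintype.card Y)
    (P : Y → Y → ℝ)
    (hP0 : ∀ y y', 0 ≤ P y y') (hP1 : ∀ y y', P y y' ≤ 1)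
    (hPsum : ∀ y y', P y y' + P y' y = 1)
    (β : ℝ) (hβ : 0 < β)
    (θref : Y → ℝ)
    (θstar : Y → ℝ)
    (hstar : θstar = fun y => θref y + matVec P (softmax θstar) y / β)
    (η : ℝ) (hη : 0 < η) (hη' : η ≤ 1 / (β + 3))
    (θ θhalf : ℕ → Y → ℝ)
    (hhalf : ∀ t, θhalf t = fun y =>
      (1 - η * β) * θ t y + η * β * (θref y + matVec P (softmax (θ t)) y / β))
    (hstep : ∀ t, θ (t + 1) = fun y =>
      (1 - η * β) * θ t y + η * β * (θref y + matVec P (softmax (θhalf t)) y / β))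
    (t : ℕ) :
    KLdiv (softmax θstar) (softmax (θ (t + 1)))
      ≤ (1 - η * β) * KLdiv (softmax θstar) (softmax (θ t)) := by
  have : Nonempty Y := Fintype.card_pos_iff.mp (by omega)
  have hηβ : η * (β + 3) ≤ 1 := (le_div_iff₀ (by positivity)).mp hη'
  have hfix : ∀ y, θstar y = θref y + matVec P (softmax θstar) y / β := congrFun hstar
  refine KLdiv_softmax_extragradient_le hP0 hP1 hPsum (h := θhalf t) (by positivity) hη.le
    (by nlinarith) (by nlinarith) (fun y => ?_) (fun y => ?_)
  · rw [hhalf, hfix y]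
    field_simp
    ring
  · rw [hstep, hfix y]
    field_simp
    ring
end

section
/- If π_ref is the uniform distribution on Y, then for every probability distribution π on Y and every β > 0, DualGap(π) ≤ DualGap_β(π) + 2β log|Y|. -/
/-- The probability simplex over a finite set. -/
def simplex (Y : Type*) [Fintype Y] : Set (Y → ℝ) :=
  {p | (∀ y, 0 ≤ p y) ∧ ∑ y, p y = 1}

/-- Value of the preference game: `V(π, π') = ∑ y y', π(y) P(y,y') π'(y')`. -/
noncomputable def Vval {Y : Type*} [Fintype Y] (P : Y → Y → ℝ) (p q : Y → ℝ) : ℝ :=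
  ∑ y, ∑ y', p y * P y y' * q y'

/-- Regularized value `V_β(π, π') = V(π, π') − β KL(π‖π_ref) + β KL(π'‖π_ref)`. -/
noncomputable def Vreg {Y : Type*} [Fintype Y] (P : Y → Y → ℝ) (β : ℝ) (πref : Y → ℝ)
    (p q : Y → ℝ) : ℝ :=
  Vval P p q - β * KLdiv p πref + β * KLdiv q πref

/-- Regularized duality gap. -/
noncomputable def DualGapReg {Y : Type*} [Fintype Y] (P : Y → Y → ℝ) (β : ℝ) (πref : Y → ℝ)
    (p : Y → ℝ) : ℝ :=
  (⨆ q : simplex Y, Vreg P β πref q.1 p) - (⨅ q : simplex Y, Vreg P β πref p q.1)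

/-- Unregularized duality gap. -/
noncomputable def DualGap {Y : Type*} [Fintype Y] (P : Y → Y → ℝ) (p : Y → ℝ) : ℝ :=
  (⨆ q : simplex Y, Vval P q.1 p) - (⨅ q : simplex Y, Vval P p q.1)

/-!
Against the uniform reference, `0 ≤ KL(q‖π_ref) ≤ log |Y|` for every distribution `q`. Since
`V(q, π) = V_β(q, π) + β KL(q‖π_ref) − β KL(π‖π_ref)`, on either side of the game the best
unregularized response beats the best regularized one by at most `β log |Y| − β KL(π‖π_ref)`,
and `KL(π‖π_ref) ≥ 0`. The same KL bounds, with `|V| ≤ ∑ |P|` on the simplex, keep the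
regularized supremum and infimum finite, so that they are not the junk value of `⨆`/`⨅`.
-/

open Real Finset

section

variable {Y : Type*} [Fintype Y]

theorem le_one_of_mem_simplex {q : Y → ℝ} (hq : q ∈ simplex Y) (y : Y) : q y ≤ 1 :=
  hq.2 ▸ single_le_sum (fun y' _ => hq.1 y') (mem_univ y)

theorem card_pos_of_mem_simplex {q : Y → ℝ} (hq : q ∈ simplex Y) : 0 < Fintype.card Y := by
  rcases isEmpty_or_nonempty Y with hY | hY
  · simpa using hq.2
  · exact Fintype.card_pos

theorem sub_le_mul_log_div {x c : ℝ} (hx : 0 ≤ x) (hc : 0 < c) : x - c ≤ x * log (x / c) :=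
  calc x - c = c * (x / c - 1) := by field_simp
    _ ≤ c * (x / c * log (x / c)) := by gcongr; exact self_sub_one_le_mul_log (by positivity)
    _ = x * log (x / c) := by field_simp

theorem mul_log_div_le_mul_log_inv {x c : ℝ} (hx0 : 0 ≤ x) (hx1 : x ≤ 1) (hc : 0 < c) :
    x * log (x / c) ≤ x * log c⁻¹ := by
  rcases hx0.eq_or_lt with rfl | hx
  · simp
  · gcongr
    simpa [div_eq_mul_inv] using mul_le_mul_of_nonneg_right hx1 (inv_nonneg.2 hc.le)

theorem KLdiv_uniform_nonneg {q : Y → ℝ} (hq : q ∈ simplex Y) :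
    0 ≤ KLdiv q (fun _ => (Fintype.card Y : ℝ)⁻¹) := by
  have hN : (0 : ℝ) < Fintype.card Y := mod_cast card_pos_of_mem_simplex hq
  calc (0 : ℝ) = ∑ y, (q y - (Fintype.card Y : ℝ)⁻¹) := by
        rw [sum_sub_distrib, hq.2, sum_const, card_univ, nsmul_eq_mul,
          mul_inv_cancel₀ hN.ne', sub_self]
    _ ≤ KLdiv q (fun _ => (Fintype.card Y : ℝ)⁻¹) :=
        sum_le_sum fun y _ => sub_le_mul_log_div (hq.1 y) (inv_pos.2 hN)

theorem KLdiv_uniform_le_log_card {q : Y → ℝ} (hq : q ∈ simplex Y) :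
    KLdiv q (fun _ => (Fintype.card Y : ℝ)⁻¹) ≤ log (Fintype.card Y) := by
  have hN : (0 : ℝ) < Fintype.card Y := mod_cast card_pos_of_mem_simplex hq
  calc KLdiv q (fun _ => (Fintype.card Y : ℝ)⁻¹)
      ≤ ∑ y, q y * log (Fintype.card Y : ℝ)⁻¹⁻¹ :=
        sum_le_sum fun y _ => mul_log_div_le_mul_log_inv (hq.1 y) (le_one_of_mem_simplex hq y)
          (inv_pos.2 hN)
    _ = log (Fintype.card Y) := by rw [inv_inv, ← sum_mul, hq.2, one_mul]

theorem abs_Vval_le (P : Y → Y → ℝ) {p q : Y → ℝ} (hp : p ∈ simplex Y) (hq : q ∈ simplex Y) :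
    |Vval P p q| ≤ ∑ y, ∑ y', |P y y'| :=
  calc |Vval P p q| ≤ ∑ y, ∑ y', |p y * P y y' * q y'| :=
        (abs_sum_le_sum_abs _ _).trans (sum_le_sum fun y _ => abs_sum_le_sum_abs _ _)
    _ ≤ ∑ y, ∑ y', |P y y'| := by
        refine sum_le_sum fun y _ => sum_le_sum fun y' _ => ?_
        rw [abs_mul, abs_mul, abs_of_nonneg (hp.1 y), abs_of_nonneg (hq.1 y')]
        calc p y * |P y y'| * q y' ≤ 1 * |P y y'| * 1 := by
              gcongr
              exacts [hq.1 y', le_one_of_mem_simplex hp y, le_one_of_mem_simplex hq y']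
          _ = |P y y'| := by ring

variable {P : Y → Y → ℝ} {β C : ℝ} {πref p : Y → ℝ}

theorem bddAbove_range_Vreg_left (hβ : 0 ≤ β) (hKL : ∀ q ∈ simplex Y, 0 ≤ KLdiv q πref)
    (hp : p ∈ simplex Y) : BddAbove (Set.range fun q : simplex Y => Vreg P β πref q.1 p) := by
  refine ⟨∑ y, ∑ y', |P y y'| + β * KLdiv p πref, ?_⟩
  rintro _ ⟨q, rfl⟩
  have hV := (abs_le.1 (abs_Vval_le P q.2 hp)).2
  have := mul_nonneg hβ (hKL q q.2)
  simp only [Vreg]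
  linarith

theorem bddBelow_range_Vreg_right (hβ : 0 ≤ β) (hKL : ∀ q ∈ simplex Y, 0 ≤ KLdiv q πref)
    (hp : p ∈ simplex Y) : BddBelow (Set.range fun q : simplex Y => Vreg P β πref p q.1) := by
  refine ⟨-∑ y, ∑ y', |P y y'| - β * KLdiv p πref, ?_⟩
  rintro _ ⟨q, rfl⟩
  have hV := (abs_le.1 (abs_Vval_le P hp q.2)).1
  have := mul_nonneg hβ (hKL q q.2)
  simp only [Vreg]
  linarith

theorem iSup_Vval_le (hβ : 0 ≤ β) (hKL : ∀ q ∈ simplex Y, KLdiv q πref ∈ Set.Icc 0 C)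
    (hp : p ∈ simplex Y) :
    ⨆ q : simplex Y, Vval P q.1 p ≤
      (⨆ q : simplex Y, Vreg P β πref q.1 p) + β * C - β * KLdiv p πref := by
  have : Nonempty (simplex Y) := ⟨⟨p, hp⟩⟩
  refine ciSup_le fun q => ?_
  have hq := le_ciSup (bddAbove_range_Vreg_left (P := P) hβ (fun q hq => (hKL q hq).1) hp) q
  have := mul_le_mul_of_nonneg_left (hKL q q.2).2 hβ
  have hreg : Vreg P β πref q.1 p = Vval P q.1 p - β * KLdiv q.1 πref + β * KLdiv p πref := rfl
  linarith

theorem le_iInf_Vval (hβ : 0 ≤ β) (hKL : ∀ q ∈ simplex Y, KLdiv q πref ∈ Set.Icc 0 C)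
    (hp : p ∈ simplex Y) :
    (⨅ q : simplex Y, Vreg P β πref p q.1) + β * KLdiv p πref - β * C ≤
      ⨅ q : simplex Y, Vval P p q.1 := by
  have : Nonempty (simplex Y) := ⟨⟨p, hp⟩⟩
  refine le_ciInf fun q => ?_
  have hq := ciInf_le (bddBelow_range_Vreg_right (P := P) hβ (fun q hq => (hKL q hq).1) hp) q
  have := mul_le_mul_of_nonneg_left (hKL q q.2).2 hβ
  have hreg : Vreg P β πref p q.1 = Vval P p q.1 - β * KLdiv p πref + β * KLdiv q.1 πref := rfl
  linarith

theorem dualGap_le_dualGapReg_add (hβ : 0 ≤ β) (hKL : ∀ q ∈ simplex Y, KLdiv q πref ∈ Set.Icc 0 C)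
    (hp : p ∈ simplex Y) : DualGap P p ≤ DualGapReg P β πref p + 2 * β * C := by
  have hsup := iSup_Vval_le (P := P) hβ hKL hp
  have hinf := le_iInf_Vval (P := P) hβ hKL hp
  have := mul_nonneg hβ (hKL p hp).1
  rw [DualGap, DualGapReg]
  linarith

end

theorem dual_gap_le_regularized_dual_gap_add_general
    {Y : Type*} [Fintype Y]
    (P : Y → Y → ℝ)
    (πref : Y → ℝ) (href : πref = fun _ => (Fintype.card Y : ℝ)⁻¹)
    (p : Y → ℝ) (hp : p ∈ simplex Y)
    (β : ℝ) (hβ : 0 < β) :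
    DualGap P p ≤ DualGapReg P β πref p + 2 * β * Real.log (Fintype.card Y) := by
  subst href
  exact dualGap_le_dualGapReg_add hβ.le
    (fun q hq => ⟨KLdiv_uniform_nonneg hq, KLdiv_uniform_le_log_card hq⟩) hp

/-- if `π_ref` is the uniform distribution, then for every distribution `π` and
every `β > 0`, `DualGap(π) ≤ DualGap_β(π) + 2β log|Y|`. -/
theorem dual_gap_le_regularized_dual_gap_add
    {Y : Type*} [Fintype Y] (hY : 2 ≤ Fintype.card Y)
    (P : Y → Y → ℝ)
    (hP0 : ∀ y y', 0 ≤ P y y') (hP1 : ∀ y y', P y y' ≤ 1)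
    (hPsum : ∀ y y', P y y' + P y' y = 1)
    (πref : Y → ℝ) (href : πref = fun _ => (Fintype.card Y : ℝ)⁻¹)
    (p : Y → ℝ) (hp : p ∈ simplex Y)
    (β : ℝ) (hβ : 0 < β) :
    DualGap P p ≤ DualGapReg P β πref p + 2 * β * Real.log (Fintype.card Y) :=
  dual_gap_le_regularized_dual_gap_add_general P πref href p hp β hβ
end

section
/- Let μ be a fixed probability distribution on Y and let π^s = Uniform(Y) × Uniform(Y). Setting d = θ − θ_ref − (Pμ)/β ∈ ℝ^{|Y|} and d̄ = (1/|Y|) Σ_{z∈Y} d(z), the gradient of the generalized IPO loss satisfies, for every coordinate z ∈ Y, (∇_θ L_IPO(θ; π^s, μ))(z) = (4/|Y|) · (d(z) − d̄). -/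
open Real

/-- Generalized IPO loss with sampling distribution `Uniform(Y) × Uniform(Y)` and fixed
comparison distribution `μdist` (not differentiated through). -/
noncomputable def LIPO {Y : Type*} [Fintype Y] (P : Y → Y → ℝ) (β : ℝ) (θref : Y → ℝ)
    (μdist : Y → ℝ) (θ : Y → ℝ) : ℝ :=
  ((Fintype.card Y : ℝ)⁻¹) ^ 2 * ∑ y, ∑ y',
    (Real.log (softmax θ y * softmax θref y' / (softmax θ y' * softmax θref y))
      - β⁻¹ * ∑ y'', μdist y'' * (P y y'' - P y' y'')) ^ 2

/-!
The softmax normalisations cancel in the ratio inside the logarithm, so the log-ratio is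
`(θ y - θref y) - (θ y' - θref y')`, and `(1/β) E_μ[P(y,·) - P(y',·)] = (Pμ)(y)/β - (Pμ)(y')/β`.
Hence the loss is `|Y|⁻² ∑_{y,y'} (d y - d y')²` with `d = θ - θref - Pμ/β`, a quadratic in `θ`
whose derivative in direction `v` is `|Y|⁻² · 4 (|Y| ∑ d v - (∑ d)(∑ v))`.
-/

section IPOLoss

variable {Y : Type*} [Fintype Y]

local notation "proj" => ContinuousLinearMap.proj (R := ℝ) (φ := fun _ : Y => ℝ)

noncomputable def pairSqDiffSum (g : Y → ℝ) : ℝ :=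
  ∑ y, ∑ y', (g y - g y') ^ 2

theorem hasFDerivAt_pairSqDiffSum (g : Y → ℝ) :
    HasFDerivAt pairSqDiffSum (∑ y, ∑ y', (2 * (g y - g y')) • (proj y - proj y')) g := by
  refine HasFDerivAt.fun_sum fun y _ => HasFDerivAt.fun_sum fun y' _ => ?_
  have hdiff := (proj y - proj y').hasFDerivAt (x := g)
  simpa [two_mul] using hdiff.pow 2

theorem sum_sum_sub_mul_sub (g v : Y → ℝ) :
    ∑ y, ∑ y', (g y - g y') * (v y - v y')
      = 2 * (Fintype.card Y * ∑ y, g y * v y - (∑ y, g y) * ∑ y, v y) := by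
  simp only [sub_mul, mul_sub, Finset.sum_sub_distrib, Finset.sum_const, Finset.card_univ,
    nsmul_eq_mul, ← Finset.mul_sum, ← Finset.sum_mul]
  ring

theorem fderiv_pairSqDiffSum_apply (g v : Y → ℝ) :
    fderiv ℝ pairSqDiffSum g v
      = 4 * (Fintype.card Y * ∑ y, g y * v y - (∑ y, g y) * ∑ y, v y) := by
  rw [(hasFDerivAt_pairSqDiffSum g).fderiv]
  simp only [sum_apply, smul_apply, sub_apply, ContinuousLinearMap.proj_apply, smul_eq_mul,
    mul_assoc, ← Finset.mul_sum, sum_sum_sub_mul_sub]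
  ring

theorem fderiv_pairSqDiffSum_single [DecidableEq Y] (g : Y → ℝ) (z : Y) :
    fderiv ℝ pairSqDiffSum g (Pi.single z 1) = 4 * (Fintype.card Y * g z - ∑ y, g y) := by
  simp [fderiv_pairSqDiffSum_apply, Pi.single_apply]

theorem softmax_div_softmax (θ : Y → ℝ) (y y' : Y) :
    softmax θ y / softmax θ y' = exp (θ y - θ y') := by
  have : Nonempty Y := ⟨y⟩
  have hZ : (∑ w, exp (θ w)) ≠ 0 :=
    (Finset.sum_pos (fun w _ => exp_pos (θ w)) Finset.univ_nonempty).ne'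
  simp only [softmax, div_div_div_cancel_right₀ hZ, exp_sub]

theorem log_softmax_ratio (θ θ' : Y → ℝ) (y y' : Y) :
    log (softmax θ y * softmax θ' y' / (softmax θ y' * softmax θ' y))
      = (θ y - θ' y) - (θ y' - θ' y') := by
  rw [mul_div_mul_comm, softmax_div_softmax, softmax_div_softmax, ← exp_add, log_exp]
  ring

theorem inv_mul_sum_mul_sub_eq_matVec (P : Y → Y → ℝ) (β : ℝ) (μdist : Y → ℝ) (y y' : Y) :
    β⁻¹ * ∑ y'', μdist y'' * (P y y'' - P y' y'')
      = matVec P μdist y / β - matVec P μdist y' / β := by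
  simp only [matVec, div_sub_div_same, ← Finset.sum_sub_distrib, inv_mul_eq_div]
  congr 1
  exact Finset.sum_congr rfl fun w _ => by ring

theorem LIPO_eq_pairSqDiffSum (P : Y → Y → ℝ) (β : ℝ) (θref μdist : Y → ℝ) :
    LIPO P β θref μdist = fun θ => ((Fintype.card Y : ℝ)⁻¹) ^ 2 *
      pairSqDiffSum (θ - fun w => θref w + matVec P μdist w / β) := by
  funext θ
  simp only [LIPO, pairSqDiffSum, log_softmax_ratio, inv_mul_sum_mul_sub_eq_matVec, Pi.sub_apply]
  congr 1
  exact Finset.sum_congr rfl fun y _ => Finset.sum_congr rfl fun y' _ => by ring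

end IPOLoss

theorem ipo_loss_gradient_formula_general
    {Y : Type*} [Fintype Y] [DecidableEq Y]
    (P : Y → Y → ℝ)
    (β : ℝ)
    (θref : Y → ℝ)
    (μdist : Y → ℝ)
    (θ : Y → ℝ) (d : Y → ℝ)
    (hd : d = fun w => θ w - θref w - matVec P μdist w / β)
    (dbar : ℝ) (hdbar : dbar = (∑ w, d w) / (Fintype.card Y : ℝ))
    (z : Y) :
    fderiv ℝ (LIPO P β θref μdist) θ (Pi.single z 1)
      = 4 / (Fintype.card Y : ℝ) * (d z - dbar) := by
  set e : Y → ℝ := fun w => θref w + matVec P μdist w / β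
  have hde : θ - e = d := by
    rw [hd]; funext w; simp only [Pi.sub_apply, e]; ring
  have hdiff : DifferentiableAt ℝ (fun t => pairSqDiffSum (t - e)) θ :=
    (differentiableAt_comp_sub e).mpr (hasFDerivAt_pairSqDiffSum (θ - e)).differentiableAt
  have : Nonempty Y := ⟨z⟩
  have hn : (Fintype.card Y : ℝ) ≠ 0 := Nat.cast_ne_zero.mpr Fintype.card_ne_zero
  rw [LIPO_eq_pairSqDiffSum, fderiv_const_mul hdiff, smul_apply,
    fderiv_comp_sub, hde, fderiv_pairSqDiffSum_single, hdbar, smul_eq_mul]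
  field_simp

/-- with `d = θ − θ_ref − (Pμ)/β` and `d̄` its average, each coordinate of the
gradient of the generalized IPO loss equals `(4/|Y|) (d(z) − d̄)`. -/
theorem ipo_loss_gradient_formula
    {Y : Type*} [Fintype Y] [DecidableEq Y] (hY : 2 ≤ Fintype.card Y)
    (P : Y → Y → ℝ)
    (hP0 : ∀ y y', 0 ≤ P y y') (hP1 : ∀ y y', P y y' ≤ 1)
    (hPsum : ∀ y y', P y y' + P y' y = 1)
    (β : ℝ) (hβ : 0 < β)
    (θref : Y → ℝ)
    (μdist : Y → ℝ) (hμdist : (∀ y, 0 ≤ μdist y) ∧ ∑ y, μdist y = 1)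
    (θ : Y → ℝ) (d : Y → ℝ)
    (hd : d = fun w => θ w - θref w - matVec P μdist w / β)
    (dbar : ℝ) (hdbar : dbar = (∑ w, d w) / (Fintype.card Y : ℝ))
    (z : Y) :
    fderiv ℝ (LIPO P β θref μdist) θ (Pi.single z 1)
      = 4 / (Fintype.card Y : ℝ) * (d z - dbar) :=
  ipo_loss_gradient_formula_general P β θref μdist θ d hd dbar hdbar z
end
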